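/- Acoustical wave equation for the velocity of a barotropic fluid (eq:Vgenint): let V : ℝ⁴ → ℝ⁴ be a smooth vector field, G : ℝ → ℝ a smooth function, and set s := −V_μ V^μ. Suppose the continuity equation ∂_μ(G(s) V^μ) = 0 and the Euler equation V^μ ∂_μ V_α + (1/2) ∂_α s = 0 (for every α) hold on ℝ⁴. Define h^{μν} := G(s) m^{μν} − 2 G′(s) V^μ V^ν and ω_{αν} := ∂_α V_ν − ∂_ν V_α. Then for every α ∈ {0,1,2,3}, at every point of ℝ⁴ one has ∂_μ( h^{μν} ∂_ν V_α ) + ∂_μ( G(s) m^{μν} ω_{αν} ) = 0, with repeated Greek indices summed over {0,1,2,3}. -/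

import Mathlib

open scoped BigOperators

local notation "infE" => ((⊤ : ℕ∞) : WithTop ℕ∞)

noncomputable section

/-- Partial derivative `∂_μ` of a real-valued function on `ℝ⁴`. -/
def pd (μ : Fin 4) (f : (Fin 4 → ℝ) → ℝ) : (Fin 4 → ℝ) → ℝ :=
  fun x => fderiv ℝ f x (Pi.single μ 1)

/-- Minkowski metric signs: `msign 0 = −1`, `msign i = 1` for `i = 1,2,3`. -/
def msign (μ : Fin 4) : ℝ := if μ = 0 then -1 else 1

/-- Derivative along the vector field `V` : `D_V f = V^μ ∂_μ f`. -/
def DV (V : (Fin 4 → ℝ) → Fin 4 → ℝ) (f : (Fin 4 → ℝ) → ℝ) : (Fin 4 → ℝ) → ℝ :=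
  fun x => ∑ μ : Fin 4, V x μ * pd μ f x

/-- The d'Alembertian `□f = −∂₀²f + Σᵢ ∂ᵢ²f = m^{μν} ∂_μ∂_ν f`. -/
def dAl (f : (Fin 4 → ℝ) → ℝ) : (Fin 4 → ℝ) → ℝ :=
  fun x => ∑ μ : Fin 4, msign μ * pd μ (pd μ f) x

/-! ### Auxiliary lemmas about `pd` -/

lemma oneLe : infE ≠ 0 := by simp

lemma pd_contDiff {f : (Fin 4 → ℝ) → ℝ} (hf : ContDiff ℝ infE f) (μ : Fin 4) :
    ContDiff ℝ infE (pd μ f) :=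
  (ContinuousLinearMap.apply ℝ ℝ (Pi.single μ 1 : Fin 4 → ℝ)).contDiff.comp
    (hf.fderiv_right le_rfl)

lemma pd_add {f g : (Fin 4 → ℝ) → ℝ} {x : Fin 4 → ℝ} (μ : Fin 4)
    (hf : DifferentiableAt ℝ f x) (hg : DifferentiableAt ℝ g x) :
    pd μ (fun y => f y + g y) x = pd μ f x + pd μ g x := by
  simp [pd, fderiv_fun_add hf hg]

lemma pd_sum {ι : Type*} (t : Finset ι) (f : ι → (Fin 4 → ℝ) → ℝ) {x : Fin 4 → ℝ} (μ : Fin 4)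
    (hf : ∀ i ∈ t, DifferentiableAt ℝ (f i) x) :
    pd μ (fun y => ∑ i ∈ t, f i y) x = ∑ i ∈ t, pd μ (f i) x := by
  simp [pd, fderiv_fun_sum hf]

lemma pd_mul {f g : (Fin 4 → ℝ) → ℝ} {x : Fin 4 → ℝ} (μ : Fin 4)
    (hf : DifferentiableAt ℝ f x) (hg : DifferentiableAt ℝ g x) :
    pd μ (fun y => f y * g y) x = pd μ f x * g x + f x * pd μ g x := by
  simp only [pd, fderiv_fun_mul hf hg, ContinuousLinearMap.add_apply,
    ContinuousLinearMap.smul_apply, smul_eq_mul]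
  ring

lemma pd_const_mul {f : (Fin 4 → ℝ) → ℝ} {x : Fin 4 → ℝ} (μ : Fin 4) (c : ℝ)
    (hf : DifferentiableAt ℝ f x) :
    pd μ (fun y => c * f y) x = c * pd μ f x := by
  simp [pd, fderiv_const_mul hf c]

lemma pd_comp {G : ℝ → ℝ} {s : (Fin 4 → ℝ) → ℝ} {x : Fin 4 → ℝ} (μ : Fin 4)
    (hG : DifferentiableAt ℝ G (s x)) (hs : DifferentiableAt ℝ s x) :
    pd μ (fun y => G (s y)) x = deriv G (s x) * pd μ s x := by
  have := fderiv_comp x hG hs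
  simp only [Function.comp_def] at this
  simp only [pd, this, ContinuousLinearMap.comp_apply]
  have h1 : (fderiv ℝ s x) (Pi.single μ 1) = ((fderiv ℝ s x) (Pi.single μ 1)) • (1 : ℝ) := by
    simp
  rw [h1, map_smul, smul_eq_mul, smul_eq_mul, fderiv_apply_one_eq_deriv]
  ring

lemma pd_comm {f : (Fin 4 → ℝ) → ℝ} (hf : ContDiff ℝ infE f) (μ ν : Fin 4) (x : Fin 4 → ℝ) :
    pd μ (pd ν f) x = pd ν (pd μ f) x := by
  have h1 : ContDiff ℝ infE (fderiv ℝ f) := hf.fderiv_right le_rfl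
  have hd : ∀ y, HasFDerivAt f (fderiv ℝ f y) y := fun y =>
    (hf.differentiable oneLe y).hasFDerivAt
  have hx : HasFDerivAt (fderiv ℝ f) (fderiv ℝ (fderiv ℝ f) x) x :=
    (h1.differentiable oneLe x).hasFDerivAt
  have key : ∀ κ ρ : Fin 4,
      pd κ (pd ρ f) x = fderiv ℝ (fderiv ℝ f) x (Pi.single κ 1) (Pi.single ρ 1) := by
    intro κ ρ
    have h2 : HasFDerivAt (fun y => fderiv ℝ f y (Pi.single ρ 1))
        (((ContinuousLinearMap.apply ℝ ℝ (Pi.single ρ 1 : Fin 4 → ℝ)).comp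
          (fderiv ℝ (fderiv ℝ f) x))) x :=
      (ContinuousLinearMap.apply ℝ ℝ (Pi.single ρ 1 : Fin 4 → ℝ)).hasFDerivAt.comp x hx
    have h3 : pd κ (pd ρ f) x
        = fderiv ℝ (fun y => fderiv ℝ f y (Pi.single ρ 1)) x (Pi.single κ 1) := rfl
    rw [h3, h2.fderiv]
    simp
  rw [key μ ν, key ν μ]
  exact second_derivative_symmetric hd hx _ _

lemma msign_sq (μ : Fin 4) : msign μ * msign μ = 1 := by
  unfold msign; split <;> norm_num

/-- Acoustical wave equation for the velocity of a barotropic fluid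
(eq:Vgenint): if the continuity equation `∂_μ(G(s)V^μ) = 0` and the Euler
equation `V^μ∂_μV_α + ½∂_αs = 0` hold with `s := −V_μV^μ`, then with
`h^{μν} := G(s)m^{μν} − 2G′(s)V^μV^ν` and `ω_{αν} := ∂_αV_ν − ∂_νV_α`,
`∂_μ(h^{μν}∂_νV_α) + ∂_μ(G(s)m^{μν}ω_{αν}) = 0`. -/
theorem acoustical_wave_velocity
    (V : (Fin 4 → ℝ) → Fin 4 → ℝ) (hV : ContDiff ℝ (⊤ : ℕ∞) V)
    (G : ℝ → ℝ) (hG : ContDiff ℝ (⊤ : ℕ∞) G)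
    (s : (Fin 4 → ℝ) → ℝ)
    (hs : s = fun y => -∑ μ : Fin 4, msign μ * V y μ * V y μ)
    (h : Fin 4 → Fin 4 → (Fin 4 → ℝ) → ℝ)
    (hh : ∀ μ ν : Fin 4, h μ ν = fun y =>
      G (s y) * (if μ = ν then msign μ else 0) - 2 * deriv G (s y) * V y μ * V y ν)
    (ω : Fin 4 → Fin 4 → (Fin 4 → ℝ) → ℝ)
    (hω : ∀ μ ν : Fin 4, ω μ ν = fun y =>
      pd μ (fun z => msign ν * V z ν) y - pd ν (fun z => msign μ * V z μ) y)
    (hcont : ∀ x : Fin 4 → ℝ,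
      ∑ μ : Fin 4, pd μ (fun y => G (s y) * V y μ) x = 0)
    (heuler : ∀ (α : Fin 4) (x : Fin 4 → ℝ),
      (∑ μ : Fin 4, V x μ * pd μ (fun y => msign α * V y α) x)
        + (1 / 2) * pd α s x = 0)
    (α : Fin 4) (x : Fin 4 → ℝ) :
    (∑ μ : Fin 4, pd μ (fun y =>
        ∑ ν : Fin 4, h μ ν y * pd ν (fun z => msign α * V z α) y) x)
      + (∑ μ : Fin 4, pd μ (fun y =>
          ∑ ν : Fin 4, G (s y) * (if μ = ν then msign μ else 0) * ω α ν y) x) = 0 := by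
  -- basic smoothness facts (downgrade from `⊤` to `∞`)
  have hV' : ContDiff ℝ infE V := hV.of_le (by simp)
  have hG' : ContDiff ℝ infE G := hG.of_le (by simp)
  have hVc : ∀ μ : Fin 4, ContDiff ℝ infE (fun y => V y μ) := fun μ =>
    (contDiff_apply ℝ ℝ μ).comp hV'
  have hVl : ∀ μ : Fin 4, ContDiff ℝ infE (fun z => msign μ * V z μ) := fun μ =>
    contDiff_const.mul (hVc μ)
  have hs' : ContDiff ℝ infE s := by
    rw [hs]
    exact (ContDiff.sum fun μ _ => (contDiff_const.mul (hVc μ)).mul (hVc μ)).neg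
  have hGs : ContDiff ℝ infE (fun y => G (s y)) := hG'.comp hs'
  have hdG : ContDiff ℝ infE (fun y => deriv G (s y)) :=
    ((contDiff_infty_iff_deriv.mp hG').2).comp hs'
  have hF : ∀ μ : Fin 4, ContDiff ℝ infE (fun y => G (s y) * V y μ) := fun μ =>
    hGs.mul (hVc μ)
  have hhc : ∀ μ ν : Fin 4, ContDiff ℝ infE (h μ ν) := by
    intro μ ν
    rw [hh]
    exact (hGs.mul contDiff_const).sub
      (((contDiff_const.mul hdG).mul (hVc μ)).mul (hVc ν))
  have hωc : ∀ μ ν : Fin 4, ContDiff ℝ infE (ω μ ν) := by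
    intro μ ν
    rw [hω]
    exact (pd_contDiff (hVl ν) μ).sub (pd_contDiff (hVl μ) ν)
  have hA : ∀ μ : Fin 4, ContDiff ℝ infE
      (fun y => ∑ ν : Fin 4, h μ ν y * pd ν (fun z => msign α * V z α) y) := by
    intro μ
    exact ContDiff.sum fun ν _ => (hhc μ ν).mul (pd_contDiff (hVl α) ν)
  have hB : ∀ μ : Fin 4, ContDiff ℝ infE
      (fun y => ∑ ν : Fin 4, G (s y) * (if μ = ν then msign μ else 0) * ω α ν y) := by
    intro μ
    exact ContDiff.sum fun ν _ => ((hGs.mul contDiff_const).mul (hωc α ν))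
  -- the pointwise key identity
  have keyA : ∀ (μ : Fin 4) (y : Fin 4 → ℝ),
      (∑ ν : Fin 4, h μ ν y * pd ν (fun z => msign α * V z α) y)
        + (∑ ν : Fin 4, G (s y) * (if μ = ν then msign μ else 0) * ω α ν y)
      = pd α (fun z => G (s z) * V z μ) y := by
    intro μ y
    have e3 : (∑ ν : Fin 4, V y ν * pd ν (fun z => msign α * V z α) y)
        = -(1 / 2 * pd α s y) := by
      have := heuler α y; linarith
    have hrhs : pd α (fun z => G (s z) * V z μ) y
        = (deriv G (s y) * pd α s y) * V y μ + G (s y) * pd α (fun z => V z μ) y := by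
      rw [pd_mul α (hGs.differentiable oneLe y) ((hVc μ).differentiable oneLe y),
        pd_comp α (hG'.differentiable oneLe (s y)) (hs'.differentiable oneLe y)]
    have hVlpd : pd α (fun z => msign μ * V z μ) y
        = msign μ * pd α (fun z => V z μ) y :=
      pd_const_mul α (msign μ) ((hVc μ).differentiable oneLe y)
    have e1 : (∑ ν : Fin 4, h μ ν y * pd ν (fun z => msign α * V z α) y)
        = G (s y) * msign μ * pd μ (fun z => msign α * V z α) y
          - 2 * deriv G (s y) * V y μ *
            (∑ ν : Fin 4, V y ν * pd ν (fun z => msign α * V z α) y) := by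
      simp only [hh, sub_mul]
      rw [Finset.sum_sub_distrib]
      congr 1
      · simp only [mul_ite, mul_zero, ite_mul, zero_mul]
        rw [Finset.sum_ite_eq]
        simp [mul_assoc]
      · rw [Finset.mul_sum]
        exact Finset.sum_congr rfl fun ν _ => by ring
    have e2 : (∑ ν : Fin 4, G (s y) * (if μ = ν then msign μ else 0) * ω α ν y)
        = G (s y) * msign μ *
          (pd α (fun z => msign μ * V z μ) y - pd μ (fun z => msign α * V z α) y) := by
      simp only [mul_ite, mul_zero, ite_mul, zero_mul]
      rw [Finset.sum_ite_eq]
      simp [hω, mul_assoc]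
    rw [e1, e2, e3, hrhs, hVlpd]
    linear_combination (G (s y) * pd α (fun z => V z μ) y) * msign_sq μ
  -- now assemble
  have hAB : ∀ μ : Fin 4,
      (fun y => (∑ ν : Fin 4, h μ ν y * pd ν (fun z => msign α * V z α) y)
        + (∑ ν : Fin 4, G (s y) * (if μ = ν then msign μ else 0) * ω α ν y))
      = pd α (fun z => G (s z) * V z μ) := fun μ => funext (keyA μ)
  calc
    (∑ μ : Fin 4, pd μ (fun y =>
        ∑ ν : Fin 4, h μ ν y * pd ν (fun z => msign α * V z α) y) x)
      + (∑ μ : Fin 4, pd μ (fun y =>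
          ∑ ν : Fin 4, G (s y) * (if μ = ν then msign μ else 0) * ω α ν y) x)
        = ∑ μ : Fin 4, pd μ (fun y =>
            (∑ ν : Fin 4, h μ ν y * pd ν (fun z => msign α * V z α) y)
            + (∑ ν : Fin 4, G (s y) * (if μ = ν then msign μ else 0) * ω α ν y)) x := by
          rw [← Finset.sum_add_distrib]
          refine Finset.sum_congr rfl fun μ _ => ?_
          rw [pd_add μ ((hA μ).differentiable oneLe x) ((hB μ).differentiable oneLe x)]
    _ = ∑ μ : Fin 4, pd μ (pd α (fun z => G (s z) * V z μ)) x := by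
          refine Finset.sum_congr rfl fun μ _ => ?_
          rw [hAB μ]
    _ = ∑ μ : Fin 4, pd α (pd μ (fun z => G (s z) * V z μ)) x := by
          refine Finset.sum_congr rfl fun μ _ => ?_
          exact pd_comm (hF μ) μ α x
    _ = pd α (fun y => ∑ μ : Fin 4, pd μ (fun z => G (s z) * V z μ) y) x := by
          rw [pd_sum Finset.univ _ α
            (fun μ _ => (pd_contDiff (hF μ) μ).differentiable oneLe x)]
    _ = 0 := by
          have hz : (fun y => ∑ μ : Fin 4, pd μ (fun z => G (s z) * V z μ) y)
              = fun _ => (0 : ℝ) := funext fun y => hcont y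
          rw [hz]
          simp [pd]
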